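/- arXiv:quant-ph/0504116 — 6 statements merged into one kernel-verified Lean document; each statement's English description precedes it below -/
import Mathlib

section
/- For any unit vector a in a finite-dimensional complex Hilbert space, any unitary operator W on that space, and any ε > 0, there exists an integer n ≥ 1 such that |⟨a|Wⁿ|a⟩| > 1 − ε. -/
/-!
The orbit `n ↦ Wⁿ a` lies in the unit sphere, which is compact, so by pigeonhole two of its
points `Wᵐ a` and `Wⁿ a` with `m < n` are `ε`-close. Since `W` is an isometry, `‖W^(n-m) a - a‖ < ε`, and then
`|⟨a, W^(n-m) a⟩| ≥ ⟨a, a⟩ - |⟨a, a - W^(n-m) a⟩| > 1 - ε`.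
-/

open Function Set Metric

theorem TotallyBounded.exists_lt_dist_lt {X : Type*} [PseudoMetricSpace X] {s : Set X}
    (hs : TotallyBounded s) {u : ℕ → X} (hu : ∀ n, u n ∈ s) {δ : ℝ} (hδ : 0 < δ) :
    ∃ m n, m < n ∧ dist (u n) (u m) < δ := by
  obtain ⟨t, -, htf, hcover⟩ := finite_approx_of_totallyBounded hs (δ / 2) (half_pos hδ)
  have hnear : ∀ n, ∃ y ∈ t, u n ∈ ball y (δ / 2) := fun n => by
    simpa only [mem_iUnion, exists_prop] using hcover (hu n)
  choose c hct hc using hnear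
  obtain ⟨m, n, hmn, hcmn⟩ := Set.Finite.exists_lt_map_eq_of_forall_mem hct htf
  refine ⟨m, n, hmn, ?_⟩
  calc dist (u n) (u m) ≤ dist (u n) (c n) + dist (u m) (c m) := by
        rw [hcmn]; exact dist_triangle_right _ _ _
    _ < δ / 2 + δ / 2 := add_lt_add (hc n) (hc m)
    _ = δ := add_halves δ

theorem Isometry.iterate {X : Type*} [PseudoEMetricSpace X] {f : X → X} (hf : Isometry f) :
    ∀ n, Isometry f^[n]
  | 0 => isometry_id
  | n + 1 => (hf.iterate n).comp hf

theorem Isometry.exists_dist_iterate_lt {X : Type*} [PseudoMetricSpace X] {f : X → X}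
    (hf : Isometry f) {x : X} (hx : TotallyBounded (range fun n => f^[n] x)) {δ : ℝ}
    (hδ : 0 < δ) : ∃ n, 1 ≤ n ∧ dist (f^[n] x) x < δ := by
  obtain ⟨m, n, hmn, hclose⟩ := hx.exists_lt_dist_lt (fun n => mem_range_self n) hδ
  refine ⟨n - m, by omega, ?_⟩
  have hsplit : f^[n] x = f^[m] (f^[n - m] x) := by
    rw [← iterate_add_apply, Nat.add_sub_cancel' hmn.le]
  rwa [hsplit, (hf.iterate m).dist_eq] at hclose

theorem one_sub_norm_sub_le_norm_inner {𝕜 E : Type*} [RCLike 𝕜] [SeminormedAddCommGroup E]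
    [InnerProductSpace 𝕜 E] {a : E} (ha : ‖a‖ = 1) (b : E) :
    1 - ‖b - a‖ ≤ ‖(inner 𝕜 a b : 𝕜)‖ := by
  have hsplit : (inner 𝕜 a a : 𝕜) = inner 𝕜 a b + inner 𝕜 a (a - b) := by
    rw [inner_sub_right]; ring
  have htriangle := norm_add_le (inner 𝕜 a b : 𝕜) (inner 𝕜 a (a - b))
  have hsmall : ‖(inner 𝕜 a (a - b) : 𝕜)‖ ≤ ‖b - a‖ := by
    simpa only [ha, one_mul, norm_sub_rev] using norm_inner_le_norm (𝕜 := 𝕜) a (a - b)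
  rw [← hsplit, inner_self_eq_norm_sq_to_K, ha, RCLike.ofReal_one, one_pow, norm_one] at htriangle
  linarith

/-- Quantum recurrence theorem: for any unit vector `a` in a finite-dimensional
complex Hilbert space, any unitary operator `W`, and any `ε > 0`, there is
`n ≥ 1` with `|⟨a|Wⁿ|a⟩| > 1 - ε`. -/
theorem quantum_recurrence {H : Type*} [NormedAddCommGroup H] [InnerProductSpace ℂ H]
    [FiniteDimensional ℂ H] (W : H →L[ℂ] H) (hW : W ∈ unitary (H →L[ℂ] H))
    (a : H) (ha : ‖a‖ = 1) (ε : ℝ) (hε : 0 < ε) :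
    ∃ n : ℕ, 1 ≤ n ∧ ‖(inner ℂ a ((W ^ n) a) : ℂ)‖ > 1 - ε := by
  have horbit_sphere : range (fun n => (⇑W)^[n] a) ⊆ sphere 0 1 := range_subset_iff.2 fun n => by
    rw [mem_sphere_zero_iff_norm, ← FunLike.coe_pow_eq_iterate,
      ContinuousLinearMap.norm_map_of_mem_unitary (pow_mem hW n), ha]
  have hiso : Isometry W :=
    AddMonoidHomClass.isometry_of_norm W (ContinuousLinearMap.norm_map_of_mem_unitary hW)
  obtain ⟨n, hn, hclose⟩ :=
    hiso.exists_dist_iterate_lt ((isCompact_sphere 0 1).totallyBounded.subset horbit_sphere) hε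
  refine ⟨n, hn, ?_⟩
  rw [FunLike.coe_pow_eq_iterate]
  have hinner := one_sub_norm_sub_le_norm_inner (𝕜 := ℂ) ha ((⇑W)^[n] a)
  rw [← dist_eq_norm] at hinner
  linarith
end

section
/- For any vectors a, b in a finite-dimensional complex Hilbert space and any unitary operator W, if ⟨b|W|a⟩ ≠ 0 then there exists an integer m ≥ 0 such that ⟨a|Wᵐ|b⟩ ≠ 0. -/
/-!
The span `S` of `b, Wb, W²b, …` is `W`-invariant and finite-dimensional, and `W` is injective,
so `W` maps `S` onto `S`: `b = Wx` for some `x ∈ S`. If `a` were orthogonal to every `Wᵐb`,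
it would be orthogonal to `x`, and then `⟨b, Wa⟩ = ⟨Wx, Wa⟩ = ⟨x, a⟩ = 0`.
-/

open Submodule

section OrbitSpan

variable {K V : Type*} [Field K] [AddCommGroup V] [Module K V]

theorem Submodule.map_eq_self_of_injective {p : Submodule K V} [FiniteDimensional K p]
    {f : V →ₗ[K] V} (hf : Function.Injective f) (hp : p.map f ≤ p) : p.map f = p :=
  eq_of_le_of_finrank_eq hp (p.equivMapOfInjective f hf).finrank_eq.symm

theorem Submodule.map_span_range_pow_apply_le (f : Module.End K V) (y : V) :
    (span K (Set.range fun m : ℕ ↦ (f ^ m) y)).map f ≤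
      span K (Set.range fun m : ℕ ↦ (f ^ m) y) := by
  rw [map_span, span_le]
  rintro _ ⟨_, ⟨m, rfl⟩, rfl⟩
  exact subset_span ⟨m + 1, by simp only [pow_succ', Module.End.mul_apply]⟩

theorem Module.End.exists_mem_span_range_pow_apply_eq [FiniteDimensional K V]
    {f : Module.End K V} (hf : Function.Injective f) (y : V) :
    ∃ x ∈ span K (Set.range fun m : ℕ ↦ (f ^ m) y), f x = y := by
  have hy : y ∈ span K (Set.range fun m : ℕ ↦ (f ^ m) y) := subset_span ⟨0, rfl⟩
  rwa [← map_eq_self_of_injective hf (map_span_range_pow_apply_le f y), mem_map] at hy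

end OrbitSpan

/-- If `⟨b|W|a⟩ ≠ 0` for a unitary `W` on a finite-dimensional complex Hilbert space,
then `⟨a|Wᵐ|b⟩ ≠ 0` for some `m ≥ 0`. -/
theorem reverse_amplitude {H : Type*} [NormedAddCommGroup H] [InnerProductSpace ℂ H]
    [FiniteDimensional ℂ H] (W : H →L[ℂ] H) (hW : W ∈ unitary (H →L[ℂ] H))
    (a b : H) (h : (inner ℂ b (W a) : ℂ) ≠ 0) :
    ∃ m : ℕ, (inner ℂ a ((W ^ m) b) : ℂ) ≠ 0 := by
  by_contra! hc
  have hW_inj : Function.Injective W := (Unitary.linearIsometryEquiv ⟨W, hW⟩).injective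
  obtain ⟨x, hx, rfl⟩ := Module.End.exists_mem_span_range_pow_apply_eq
    (f := W.toLinearMap) hW_inj b
  have hax : inner ℂ a x = 0 := by
    refine (span_le (p := LinearMap.ker (innerₛₗ ℂ a))).2 ?_ hx
    rintro _ ⟨m, rfl⟩
    simpa [← ContinuousLinearMap.toLinearMap_pow] using hc m
  apply h
  rw [← inner_conj_symm, ContinuousLinearMap.coe_coe,
    ContinuousLinearMap.inner_map_map_of_mem_unitary hW, hax, map_zero]
end

section
/- For any unitary matrix U over a finite index set and any indices i, j, if U j i ≠ 0 then there exists m ≥ 1 such that (Uᵐ) i j ≠ 0. -/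
/-- Matrix-entry version of the reversal lemma: if `U` is unitary and `U j i ≠ 0`,
then `(Uᵐ) i j ≠ 0` for some `m ≥ 1`. -/
theorem matrix_reverse_entry {n : Type*} [Fintype n] [DecidableEq n]
    (U : Matrix n n ℂ) (hU : U ∈ unitary (Matrix n n ℂ))
    (i j : n) (h : U j i ≠ 0) :
    ∃ m : ℕ, 1 ≤ m ∧ (U ^ m) i j ≠ 0 := by
  haveI : FirstCountableTopology (Matrix n n ℂ) :=
    inferInstanceAs (FirstCountableTopology (n → n → ℂ))
  have hpow : ∀ m : ℕ, (U ^ m) ∈ unitary (Matrix n n ℂ) := fun m => pow_mem hU m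
  set S : Set (Matrix n n ℂ) :=
    Set.univ.pi fun _ : n => Set.univ.pi fun _ : n => Metric.closedBall (0:ℂ) 1 with hS
  have hScomp : IsCompact S :=
    isCompact_univ_pi fun _ => isCompact_univ_pi fun _ => isCompact_closedBall 0 1
  have hmem : ∀ m : ℕ, (U ^ m) ∈ S := by
    intro m a _ b _
    simp only [Metric.mem_closedBall, dist_zero_right]
    exact entry_norm_bound_of_unitary (hpow m) a b
  obtain ⟨L, -, φ, hφ, hconv⟩ := hScomp.tendsto_subseq hmem
  -- conjugate transpose (= star) is continuous, so star of the subsequence tends to star L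
  have hstarconv : Filter.Tendsto (fun k => star (U ^ φ k)) Filter.atTop (nhds (star L)) := by
    exact (continuous_star.tendsto L).comp hconv
  -- L * star L = 1
  have hL : L * star L = 1 := by
    have h1 : Filter.Tendsto (fun k => (U ^ φ k) * star (U ^ φ k)) Filter.atTop
        (nhds (L * star L)) := hconv.mul hstarconv
    have h2 : (fun k => (U ^ φ k) * star (U ^ φ k)) = fun _ => (1 : Matrix n n ℂ) := by
      funext k
      exact (hpow (φ k)).2
    rw [h2] at h1
    exact (tendsto_nhds_unique h1 tendsto_const_nhds)
  -- the gaps: a k := φ (k+1) - φ k ≥ 1, and U ^ (a k) → 1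
  set a : ℕ → ℕ := fun k => φ (k + 1) - φ k with ha
  have hak : ∀ k, 1 ≤ a k := by
    intro k
    have h2 : φ k < φ (k + 1) := hφ (Nat.lt_succ_self k)
    simp only [ha]
    omega
  have hfact : ∀ k, U ^ a k = U ^ φ (k + 1) * star (U ^ φ k) := by
    intro k
    have : U ^ a k * (U ^ φ k * star (U ^ φ k)) = U ^ φ (k + 1) * star (U ^ φ k) := by
      rw [← mul_assoc, ← pow_add]
      congr 2
      have h3 : a k = φ (k + 1) - φ k := rfl
      have h2 : φ k < φ (k + 1) := hφ (Nat.lt_succ_self k)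
      omega
    rwa [(hpow (φ k)).2, mul_one] at this
  have hconv' : Filter.Tendsto (fun k => U ^ φ (k + 1)) Filter.atTop (nhds L) :=
    hconv.comp (Filter.tendsto_add_atTop_nat 1)
  have hgap : Filter.Tendsto (fun k => U ^ a k) Filter.atTop (nhds 1) := by
    have := hconv'.mul hstarconv
    rw [hL] at this
    simpa only [← hfact] using this
  -- U ^ (2 * a k - 1) → star U
  have hdouble : Filter.Tendsto (fun k => U ^ (2 * a k)) Filter.atTop (nhds 1) := by
    have := hgap.mul hgap
    rw [one_mul] at this
    convert this using 2 with k
    rw [two_mul, pow_add]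
  have hfact2 : ∀ k, U ^ (2 * a k - 1) = U ^ (2 * a k) * star U := by
    intro k
    have h1 : U ^ (2 * a k - 1) * (U * star U) = U ^ (2 * a k) * star U := by
      rw [← mul_assoc, ← pow_succ]
      congr 2
      have := hak k
      omega
    rwa [hU.2, mul_one] at h1
  have hfin : Filter.Tendsto (fun k => U ^ (2 * a k - 1)) Filter.atTop (nhds (star U)) := by
    have := hdouble.mul (tendsto_const_nhds (x := star U))
    rw [one_mul] at this
    simpa only [← hfact2] using this
  -- evaluate the (i, j) entry; it tends to (star U) i j = conj (U j i) ≠ 0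
  have hentry : Filter.Tendsto (fun k => (U ^ (2 * a k - 1)) i j) Filter.atTop
      (nhds ((star U) i j)) := by
    have hc : Continuous fun M : Matrix n n ℂ => M i j :=
      (continuous_apply j).comp (continuous_apply i)
    exact (hc.tendsto _).comp hfin
  have hne : (star U) i j ≠ 0 := by
    rw [Matrix.star_eq_conjTranspose, Matrix.conjTranspose_apply]
    simpa using h
  obtain ⟨k, hk⟩ := (hentry.eventually_ne hne).exists
  exact ⟨2 * a k - 1, by have := hak k; omega, hk⟩
end

section
/- The digraph of a unitary matrix is reversible: if U is a unitary n×n complex matrix and U j i ≠ 0, then there is a path from j back to i in the digraph, i.e., a sequence j = w₀, w₁, ..., w_k = i with k ≥ 0 and U w_{t+1} w_t ≠ 0 for all t. -/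
/-- The digraph of a unitary matrix is reversible: every arc `i → j`
(i.e. `U j i ≠ 0`) admits a directed path from `j` back to `i`. -/
theorem unitary_digraph_reversible {n : Type*} [Fintype n] [DecidableEq n]
    (U : Matrix n n ℂ) (hU : U ∈ unitary (Matrix n n ℂ))
    (i j : n) (h : U j i ≠ 0) :
    Relation.ReflTransGen (fun a b => U b a ≠ 0) j i := by
  classical
  by_contra hni
  set R := Relation.ReflTransGen (fun a b => U b a ≠ 0) with hR
  set S : Finset n := Finset.univ.filter (fun a => R j a) with hS
  have hjS : j ∈ S := by
    simp only [hS, Finset.mem_filter, Finset.mem_univ, true_and, hR]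
    exact Relation.ReflTransGen.refl
  have hclosed : ∀ a ∈ S, ∀ b, U b a ≠ 0 → b ∈ S := by
    intro a ha b hb
    simp only [hS, Finset.mem_filter, Finset.mem_univ, true_and] at ha ⊢
    exact ha.tail hb
  have hiS : i ∉ S := by
    simp only [hS, Finset.mem_filter, Finset.mem_univ, true_and]
    exact hni
  set f : n → n → ℝ := fun k a => Complex.normSq (U k a) with hf
  have hfnn : ∀ k a, 0 ≤ f k a := fun k a => Complex.normSq_nonneg _
  obtain ⟨hU1, hU2⟩ := (Unitary.mem_iff).mp hU
  have hcol : ∀ a, ∑ k, f k a = 1 := by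
    intro a
    have := congrFun (congrFun hU1 a) a
    rw [Matrix.mul_apply] at this
    simp only [Matrix.conjTranspose_apply, Matrix.one_apply_eq] at this
    have h2 : ∑ k, ((f k a : ℂ)) = 1 := by
      rw [← this]
      refine Finset.sum_congr rfl fun k _ => ?_
      simp [hf, Matrix.star_apply, mul_comm, Complex.mul_conj', ← Complex.sq_norm]
    have := congrArg Complex.re h2
    simpa [Complex.ofReal_sum] using Complex.ofReal_injective (by push_cast; exact h2)
  have hrow : ∀ k, ∑ a, f k a = 1 := by
    intro k
    have := congrFun (congrFun hU2 k) k
    rw [Matrix.mul_apply] at this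
    simp only [Matrix.conjTranspose_apply, Matrix.one_apply_eq] at this
    have h2 : ∑ a, ((f k a : ℂ)) = 1 := by
      rw [← this]
      refine Finset.sum_congr rfl fun a _ => ?_
      simp [hf, Matrix.star_apply, Complex.mul_conj]
    exact Complex.ofReal_injective (by push_cast; exact h2)
  -- for a ∈ S, the column a is supported on S
  have hcolS : ∀ a ∈ S, ∑ k ∈ S, f k a = 1 := by
    intro a ha
    rw [← hcol a]
    apply Finset.sum_subset (Finset.subset_univ S)
    intro k _ hk
    by_contra hne
    exact hk (hclosed a ha k (fun h0 => hne (by simp [hf, h0])))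
  have hrowS_le : ∀ k, ∑ a ∈ S, f k a ≤ 1 := by
    intro k
    rw [← hrow k]
    exact Finset.sum_le_sum_of_subset_of_nonneg (Finset.subset_univ S)
      (fun a _ _ => hfnn k a)
  have htot : ∑ k ∈ S, ∑ a ∈ S, f k a = (S.card : ℝ) := by
    rw [Finset.sum_comm]
    rw [Finset.sum_congr rfl hcolS]
    simp
  -- equality forces each row partial sum to be 1
  have hrowS : ∀ k ∈ S, ∑ a ∈ S, f k a = 1 := by
    have heq : ∑ k ∈ S, ∑ a ∈ S, f k a = ∑ k ∈ S, (1 : ℝ) := by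
      rw [htot]; simp
    have := (Finset.sum_eq_sum_iff_of_le (fun k _ => hrowS_le k)).mp heq
    exact this
  -- apply to k = j : the row j vanishes outside S, contradicting U j i ≠ 0
  have hji : f j i = 0 := by
    have h1 : ∑ a ∈ insert i S, f j a ≤ 1 := by
      rw [← hrow j]
      exact Finset.sum_le_sum_of_subset_of_nonneg (Finset.subset_univ _)
        (fun a _ _ => hfnn j a)
    rw [Finset.sum_insert hiS, hrowS j hjS] at h1
    linarith [hfnn j i]
  exact h (Complex.normSq_eq_zero.mp hji)
end

section
/- In a finite directed graph in which every vertex has a self-loop, a quantum walk can be implemented on the graph if and only if the graph is reversible. Here a quantum walk is a unitary W on a finite-dimensional Hilbert space together with an assignment of a nonempty finite set of orthonormal basis states to each vertex (the sets for distinct vertices disjoint, together spanning the space), such that for all vertices i, j: i → j if and only if some matrix entry of W from a basis state of i to a basis state of j is nonzero. -/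
/-!
If `W` is unitary, the basis states reachable from those of `j` span a `W`-invariant coordinate
subspace; unitarity (every row and every column has norm one) makes its orthogonal complement
invariant as well, so an entry of `W` leading from a state of `i` into that set forces `i` to be
reachable from `j`.

Conversely, in a reversible graph every arc lies on a closed walk. Taking one basis state per
position on such a walk for each arc, and for `W` the permutation matrix advancing each walk by
one step, realizes exactly the arcs; the self-loops make every vertex carry a basis state.
-/

open Equiv Relation

theorem Relation.ReflTransGen.exists_fin_path {α : Type*} {r : α → α → Prop} {a b : α}
    (h : ReflTransGen r a b) :
    ∃ (n : ℕ) (p : Fin (n + 1) → α),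
      p 0 = a ∧ p (Fin.last n) = b ∧ ∀ t : Fin n, r (p t.castSucc) (p t.succ) := by
  induction h using ReflTransGen.head_induction_on with
  | refl => exact ⟨0, fun _ => b, rfl, rfl, Fin.elim0⟩
  | head hac _ ih =>
    obtain ⟨n, p, hp0, hpn, hp⟩ := ih
    refine ⟨n + 1, Fin.cons _ p, rfl, by simpa using hpn, Fin.cases ?_ fun t => ?_⟩
    · simpa [hp0] using hac
    · simpa using hp t

theorem Relation.ReflTransGen.exists_fin_cycle {α : Type*} {r : α → α → Prop} {i j : α}
    (hij : r i j) (hji : ReflTransGen r j i) :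
    ∃ (n : ℕ) (c : Fin (n + 1) → α),
      c (Fin.last n) = i ∧ c 0 = j ∧ ∀ t, r (c t) (c (finRotate _ t)) := by
  obtain ⟨n, p, hp0, hpn, hp⟩ := hji.exists_fin_path
  refine ⟨n, p, hpn, hp0, Fin.lastCases ?_ fun t => ?_⟩
  · rwa [finRotate_last, hpn, hp0]
  · rw [finRotate_apply, Fin.coeSucc_eq_succ]
    exact hp t

theorem Relation.exists_perm_fin_of_reversible {V : Type*} [Finite V] {r : V → V → Prop}
    (hrev : ∀ i j, r i j → ReflTransGen r j i) :
    ∃ (N : ℕ) (σ : Perm (Fin N)) (f : Fin N → V),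
      ∀ i j, r i j ↔ ∃ k, f k = i ∧ f (σ k) = j := by
  choose n c hcast hc0 hstep using
    fun a : {p : V × V // r p.1 p.2} => ReflTransGen.exists_fin_cycle a.2 (hrev _ _ a.2)
  let X := (a : {p : V × V // r p.1 p.2}) × Fin (n a + 1)
  let σ : Perm X := sigmaCongrRight fun a => finRotate _
  let g : X → V := fun x => c x.1 x.2
  have hσ : ∀ i j, r i j ↔ ∃ x, g x = i ∧ g (σ x) = j := by
    refine fun i j => ⟨fun hij => ⟨⟨⟨(i, j), hij⟩, Fin.last _⟩, hcast _, ?_⟩, ?_⟩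
    · change c _ (finRotate _ (Fin.last _)) = j
      rw [finRotate_last]
      exact hc0 _
    · rintro ⟨⟨a, t⟩, rfl, rfl⟩
      exact hstep a t
  let e := Finite.equivFin X
  refine ⟨_, e.permCongr σ, g ∘ e.symm, fun i j => ?_⟩
  simp only [hσ, e.exists_congr_left, Function.comp_apply, permCongr_apply, symm_apply_apply]

theorem Equiv.Perm.permMatrix_mem_unitary {n R : Type*} [Fintype n] [DecidableEq n] [Semiring R]
    [StarRing R] (σ : Perm n) :
    σ.permMatrix R ∈ unitary (Matrix n n R) := by
  refine ⟨?_, ?_⟩ <;>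
    rw [Matrix.star_eq_conjTranspose, Matrix.conjTranspose_permMatrix, ← Matrix.permMatrix_mul]
  · rw [mul_inv_cancel, Matrix.permMatrix_one]
  · rw [inv_mul_cancel, Matrix.permMatrix_one]

section Unitary

variable {n 𝕜 : Type*} [Fintype n] [DecidableEq n] [RCLike 𝕜] {U : Matrix n n 𝕜}

theorem Matrix.sum_col_norm_sq_eq_one_of_mem_unitary (hU : U ∈ unitary (Matrix n n 𝕜)) (k : n) :
    ∑ l, ‖U l k‖ ^ 2 = 1 := by
  have h : (star U * U) k k = 1 := by rw [Unitary.star_mul_self_of_mem hU, Matrix.one_apply_eq]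
  simp only [Matrix.mul_apply, Matrix.star_apply, RCLike.star_def, RCLike.conj_mul] at h
  exact_mod_cast h

theorem Matrix.sum_row_norm_sq_eq_one_of_mem_unitary (hU : U ∈ unitary (Matrix n n 𝕜)) (l : n) :
    ∑ k, ‖U l k‖ ^ 2 = 1 := by
  simpa using sum_col_norm_sq_eq_one_of_mem_unitary (Unitary.star_mem hU) l

theorem Matrix.apply_eq_zero_of_mem_unitary_of_invariant (hU : U ∈ unitary (Matrix n n 𝕜))
    {S : Set n} (hS : ∀ k ∈ S, ∀ l ∉ S, U l k = 0) {l k : n} (hl : l ∈ S) (hk : k ∉ S) :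
    U l k = 0 := by
  classical
  -- Summing `‖U l k‖ ^ 2` over `T × T` by columns gives `#T`; by rows, `#T` minus the `T × Tᶜ` sum.
  set T := S.toFinset
  have hcol : ∑ k ∈ T, ∑ l ∈ T, ‖U l k‖ ^ 2 = T.card := by
    calc ∑ k ∈ T, ∑ l ∈ T, ‖U l k‖ ^ 2 = ∑ k ∈ T, ∑ l, ‖U l k‖ ^ 2 := by
          refine Finset.sum_congr rfl fun k hk => Finset.sum_subset T.subset_univ fun l _ hl => ?_
          rw [hS k (by simpa [T] using hk) l (by simpa [T] using hl), norm_zero, sq, zero_mul]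
      _ = T.card := by simp [sum_col_norm_sq_eq_one_of_mem_unitary hU]
  have hrow : ∑ l ∈ T, (∑ k ∈ T, ‖U l k‖ ^ 2 + ∑ k ∈ Tᶜ, ‖U l k‖ ^ 2) = T.card := by
    simp [Finset.sum_add_sum_compl, sum_row_norm_sq_eq_one_of_mem_unitary hU]
  have hcross : ∑ l ∈ T, ∑ k ∈ Tᶜ, ‖U l k‖ ^ 2 = 0 := by
    rw [Finset.sum_add_distrib, Finset.sum_comm, hcol] at hrow
    linarith
  have hlk := (Finset.sum_eq_zero_iff_of_nonneg fun k _ => by positivity).1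
    ((Finset.sum_eq_zero_iff_of_nonneg fun l _ => by positivity).1 hcross l (by simpa [T] using hl))
    k (by simpa [T] using hk)
  simpa using hlk

end Unitary

/-- A quantum walk can be implemented on a finite digraph (with a self-loop at
every vertex) if and only if the digraph is reversible.  A quantum walk is a
unitary `W` on a finite-dimensional Hilbert space (represented by a unitary
matrix over the index set `Fin N` of an orthonormal basis) together with an
assignment `f` of basis states to vertices (nonempty fibres, i.e. `f` surjective),
such that `Adj i j` holds iff `W` has a nonzero entry from some basis state of
`i` to some basis state of `j`. -/
theorem quantum_walk_iff_reversible {V : Type*} [Fintype V]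
    (Adj : V → V → Prop) (hloop : ∀ v, Adj v v) :
    (∃ (N : ℕ) (f : Fin N → V) (W : Matrix (Fin N) (Fin N) ℂ),
        Function.Surjective f ∧ W ∈ unitary (Matrix (Fin N) (Fin N) ℂ) ∧
        ∀ i j : V, Adj i j ↔ ∃ k l : Fin N, f k = i ∧ f l = j ∧ W l k ≠ 0) ↔
    (∀ i j : V, Adj i j → Relation.ReflTransGen Adj j i) := by
  constructor
  · rintro ⟨N, f, W, -, hW, hWA⟩ i j hij
    obtain ⟨k, l, rfl, rfl, hlk⟩ := (hWA i j).1 hij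
    let S := {k | ReflTransGen Adj (f l) (f k)}
    have hS : ∀ k ∈ S, ∀ l' ∉ S, W l' k = 0 := fun k hk l' hl' =>
      not_not.1 fun hne => hl' (hk.tail ((hWA _ _).2 ⟨k, l', rfl, rfl, hne⟩))
    by_contra hkl
    exact hlk (Matrix.apply_eq_zero_of_mem_unitary_of_invariant hW hS .refl hkl)
  · intro hrev
    obtain ⟨N, σ, f, hf⟩ := exists_perm_fin_of_reversible hrev
    refine ⟨N, f, σ⁻¹.permMatrix ℂ, fun v => ?_, σ⁻¹.permMatrix_mem_unitary, fun i j => ?_⟩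
    · obtain ⟨k, hk, -⟩ := (hf v v).1 (hloop v)
      exact ⟨k, hk⟩
    · rw [hf, σ.exists_congr_left]
      simp
end

section
/- Every Eulerian digraph is reversible: if in a finite directed graph every vertex has equal in-degree and out-degree, then every arc (i, j) admits a directed path from j back to i. -/
/-- Every Eulerian digraph is reversible: if in a finite digraph every vertex has
equal in-degree and out-degree, then every arc `(i, j)` admits a directed path
from `j` back to `i`. -/
theorem eulerian_reversible {V : Type*} [Fintype V] [DecidableEq V]
    (Adj : V → V → Prop) [DecidableRel Adj]
    (heuler : ∀ v, (Finset.univ.filter fun u => Adj u v).card =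
                   (Finset.univ.filter fun u => Adj v u).card) :
    ∀ i j, Adj i j → Relation.ReflTransGen Adj j i := by
  intro i j hij
  classical
  by_contra hiS'
  set S : Finset V := Finset.univ.filter (fun v => Relation.ReflTransGen Adj j v) with hS
  have hjS : j ∈ S := Finset.mem_filter.mpr ⟨Finset.mem_univ _, Relation.ReflTransGen.refl⟩
  have hiS : i ∉ S := by simpa [hS] using hiS'
  have hclosed : ∀ v ∈ S, ∀ u, Adj v u → u ∈ S := by
    intro v hv u hvu
    simp only [hS, Finset.mem_filter, Finset.mem_univ, true_and] at hv ⊢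
    exact hv.tail hvu
  have h1 : ∀ v ∈ S, (∑ u ∈ Finset.univ, if Adj v u then (1:ℕ) else 0)
      = ∑ u ∈ S, if Adj v u then 1 else 0 := by
    intro v hv
    refine (Finset.sum_subset (Finset.subset_univ S) ?_).symm
    intro u _ huS
    simp only [ite_eq_right_iff]
    intro hadj
    exact absurd (hclosed v hv u hadj) huS
  have h2 : ∀ v : V, (∑ u ∈ Finset.univ, if Adj u v then (1:ℕ) else 0)
      = (∑ u ∈ Finset.univ \ S, if Adj u v then 1 else 0)
        + ∑ u ∈ S, if Adj u v then 1 else 0 :=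
    fun v => (Finset.sum_sdiff (Finset.subset_univ S)).symm
  have heq : ∀ v : V, (∑ u ∈ Finset.univ, if Adj u v then (1:ℕ) else 0)
      = ∑ u ∈ Finset.univ, if Adj v u then 1 else 0 := by
    intro v
    have := heuler v
    simpa only [Finset.card_filter] using this
  have A : ∑ v ∈ S, (∑ u ∈ Finset.univ \ S, if Adj u v then (1:ℕ) else 0)
      + ∑ v ∈ S, ∑ u ∈ S, (if Adj u v then (1:ℕ) else 0)
      = ∑ v ∈ S, ∑ u ∈ S, if Adj v u then (1:ℕ) else 0 := by
    rw [← Finset.sum_add_distrib]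
    calc ∑ v ∈ S, ((∑ u ∈ Finset.univ \ S, if Adj u v then (1:ℕ) else 0)
            + ∑ u ∈ S, if Adj u v then 1 else 0)
        = ∑ v ∈ S, ∑ u ∈ Finset.univ, if Adj u v then (1:ℕ) else 0 :=
          Finset.sum_congr rfl fun v _ => (h2 v).symm
      _ = ∑ v ∈ S, ∑ u ∈ Finset.univ, if Adj v u then (1:ℕ) else 0 :=
          Finset.sum_congr rfl fun v _ => heq v
      _ = ∑ v ∈ S, ∑ u ∈ S, if Adj v u then (1:ℕ) else 0 :=
          Finset.sum_congr rfl fun v hv => h1 v hv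
  have B : ∑ v ∈ S, ∑ u ∈ S, (if Adj u v then (1:ℕ) else 0)
      = ∑ v ∈ S, ∑ u ∈ S, if Adj v u then (1:ℕ) else 0 := Finset.sum_comm
  have main : ∑ v ∈ S, (∑ u ∈ Finset.univ \ S, if Adj u v then (1:ℕ) else 0) = 0 := by
    omega
  have hj0 : (∑ u ∈ Finset.univ \ S, if Adj u j then (1:ℕ) else 0) = 0 :=
    (Finset.sum_eq_zero_iff.mp main) j hjS
  have hi0 : (if Adj i j then (1:ℕ) else 0) = 0 :=
    (Finset.sum_eq_zero_iff.mp hj0) i (by simp [hiS])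
  simp [hij] at hi0
end
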